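/- arXiv:2506.09093 — 2 statements merged into one kernel-verified Lean document; each statement's English description precedes it below -/
import Mathlib

section
/- Let d ≥ 1, K ≥ 1, m ≥ 1, let S be a nonempty finite index set, and let u_k^i ∈ ℝ^d for k ∈ {1,…,K} and i ∈ S. Write m_i = (1/K) Σ_{j=1}^K u_j^i and define DV_k = Σ_{i∈S} ‖u_k^i − m_i‖. Let C₁ > C₃ ≥ 0 and C₂ ≥ 0 with C₂ + C₃ > 0, and let k₁ ≠ k₂ be indices in {1,…,K}. Assume: (i) ‖u_{k₁}^i‖ ≥ C₁ / √m for all i ∈ S; (ii) ‖u_{k₂}^i‖ ≤ C₂ / √(mK) for all i ∈ S; and (iii) ‖m_i‖ ≤ C₃ / √(mK) for all i ∈ S. Then DV_{k₁} ≥ |S| (C₁ − C₃/√K)/√m, DV_{k₂} ≤ |S| (C₂ + C₃)/√(mK), and consequently DV_{k₁} ≥ √K · ((C₁ − C₃)/(C₂ + C₃)) · DV_{k₂}. -/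
open Finset

/-- **Proposition 1 with the paper's scalings.** With rows `u k i ∈ ℝ^d`, task-averages
`avg i = (1/K) ∑ j, u j i`, and diversity `DV k = ∑ i ∈ S, ‖u k i - avg i‖`: if
`‖u k₁ i‖ ≥ C₁/√m`, `‖u k₂ i‖ ≤ C₂/√(mK)`, and `‖avg i‖ ≤ C₃/√(mK)` on `S`, then
`DV k₁ ≥ |S|(C₁ - C₃/√K)/√m`, `DV k₂ ≤ |S|(C₂ + C₃)/√(mK)`, and
`DV k₁ ≥ √K · ((C₁ - C₃)/(C₂ + C₃)) · DV k₂`. -/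
theorem diversity_separation_scaled
    {ι : Type*} (d K m : ℕ) (hd : 1 ≤ d) (hK : 1 ≤ K) (hm : 1 ≤ m)
    (S : Finset ι) (hS : S.Nonempty)
    (u : Fin K → ι → EuclideanSpace ℝ (Fin d))
    (C₁ C₂ C₃ : ℝ) (h₁₃ : C₃ < C₁) (h₃ : 0 ≤ C₃) (h₂ : 0 ≤ C₂) (h₂₃ : 0 < C₂ + C₃)
    (k₁ k₂ : Fin K) (hne : k₁ ≠ k₂)
    (hlow : ∀ i ∈ S, C₁ / Real.sqrt m ≤ ‖u k₁ i‖)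
    (hup : ∀ i ∈ S, ‖u k₂ i‖ ≤ C₂ / Real.sqrt (m * K))
    (hmean : ∀ i ∈ S, ‖(K : ℝ)⁻¹ • ∑ j, u j i‖ ≤ C₃ / Real.sqrt (m * K)) :
    (S.card : ℝ) * (C₁ - C₃ / Real.sqrt K) / Real.sqrt m ≤
        (∑ i ∈ S, ‖u k₁ i - (K : ℝ)⁻¹ • ∑ j, u j i‖) ∧
    (∑ i ∈ S, ‖u k₂ i - (K : ℝ)⁻¹ • ∑ j, u j i‖) ≤
        (S.card : ℝ) * (C₂ + C₃) / Real.sqrt (m * K) ∧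
    Real.sqrt K * ((C₁ - C₃) / (C₂ + C₃)) *
        (∑ i ∈ S, ‖u k₂ i - (K : ℝ)⁻¹ • ∑ j, u j i‖) ≤
      ∑ i ∈ S, ‖u k₁ i - (K : ℝ)⁻¹ • ∑ j, u j i‖ := by
  have hm0 : (0:ℝ) < Real.sqrt m := Real.sqrt_pos.2 (by exact_mod_cast hm)
  have hK0 : (0:ℝ) < Real.sqrt K := Real.sqrt_pos.2 (by exact_mod_cast hK)
  have hK1 : (1:ℝ) ≤ Real.sqrt K := by
    rw [show (1:ℝ) = Real.sqrt 1 from (Real.sqrt_one).symm]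
    exact Real.sqrt_le_sqrt (by exact_mod_cast hK)
  have hmK : Real.sqrt ((m:ℝ) * K) = Real.sqrt m * Real.sqrt K :=
    Real.sqrt_mul (by positivity) _
  have hmKcast : ((m * K : ℕ) : ℝ) = (m:ℝ) * K := by push_cast; ring
  -- lower bound
  have h1 : (S.card : ℝ) * (C₁ - C₃ / Real.sqrt K) / Real.sqrt m ≤
      (∑ i ∈ S, ‖u k₁ i - (K : ℝ)⁻¹ • ∑ j, u j i‖) := by
    have : ∀ i ∈ S, (C₁ - C₃ / Real.sqrt K) / Real.sqrt m ≤
        ‖u k₁ i - (K : ℝ)⁻¹ • ∑ j, u j i‖ := by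
      intro i hi
      have h1 := hlow i hi
      have h2 := hmean i hi
      have htri : ‖u k₁ i‖ - ‖(K : ℝ)⁻¹ • ∑ j, u j i‖ ≤
          ‖u k₁ i - (K : ℝ)⁻¹ • ∑ j, u j i‖ := norm_sub_norm_le _ _
      have : C₁ / Real.sqrt m - C₃ / Real.sqrt ((m:ℝ) * K) ≤
          ‖u k₁ i - (K : ℝ)⁻¹ • ∑ j, u j i‖ := by linarith
      refine le_trans (le_of_eq ?_) this
      rw [hmK]
      field_simp
    calc (S.card : ℝ) * (C₁ - C₃ / Real.sqrt K) / Real.sqrt m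
        = ∑ _i ∈ S, (C₁ - C₃ / Real.sqrt K) / Real.sqrt m := by
          rw [Finset.sum_const, nsmul_eq_mul]; ring
      _ ≤ _ := Finset.sum_le_sum this
  -- upper bound
  have h2 : (∑ i ∈ S, ‖u k₂ i - (K : ℝ)⁻¹ • ∑ j, u j i‖) ≤
      (S.card : ℝ) * (C₂ + C₃) / Real.sqrt (m * K) := by
    calc (∑ i ∈ S, ‖u k₂ i - (K : ℝ)⁻¹ • ∑ j, u j i‖)
        ≤ ∑ _i ∈ S, (C₂ + C₃) / Real.sqrt (m * K) := by
          refine Finset.sum_le_sum fun i hi => ?_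
          have h1 := hup i hi
          have h2 := hmean i hi
          have htri : ‖u k₂ i - (K : ℝ)⁻¹ • ∑ j, u j i‖ ≤
              ‖u k₂ i‖ + ‖(K : ℝ)⁻¹ • ∑ j, u j i‖ := norm_sub_le _ _
          rw [add_div]
          linarith
      _ = (S.card : ℝ) * (C₂ + C₃) / Real.sqrt (m * K) := by
          rw [Finset.sum_const, nsmul_eq_mul]; ring
  refine ⟨h1, h2, ?_⟩
  have hmK0 : (0:ℝ) < Real.sqrt ((m*K : ℕ)) := by
    rw [hmKcast, hmK]; positivity
  have key : Real.sqrt K * ((C₁ - C₃) / (C₂ + C₃)) *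
      (∑ i ∈ S, ‖u k₂ i - (K : ℝ)⁻¹ • ∑ j, u j i‖) ≤
      Real.sqrt K * ((C₁ - C₃) / (C₂ + C₃)) *
      ((S.card : ℝ) * (C₂ + C₃) / Real.sqrt (m * K)) := by
    refine mul_le_mul_of_nonneg_left h2 ?_
    have : 0 ≤ (C₁ - C₃) / (C₂ + C₃) := div_nonneg (by linarith) h₂₃.le
    positivity
  refine le_trans key (le_trans ?_ h1)
  have hSc : (0:ℝ) ≤ (S.card : ℝ) := by positivity
  rw [hmK]
  have hstep : Real.sqrt K * ((C₁ - C₃) / (C₂ + C₃)) *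
      ((S.card : ℝ) * (C₂ + C₃) / (Real.sqrt m * Real.sqrt K))
      = (S.card : ℝ) * (C₁ - C₃) / Real.sqrt m := by
    field_simp
  rw [hstep]
  gcongr
  have : C₃ / Real.sqrt K ≤ C₃ := by
    rw [div_le_iff₀ hK0]
    nlinarith
  linarith
end

section
/- Let d ≥ 1, K ≥ 1, let S be a nonempty finite index set, and let u_k^i ∈ ℝ^d for k ∈ {1,…,K} and i ∈ S. Write m_i = (1/K) Σ_{j=1}^K u_j^i and define the block diversity of family k as DV'_k = √( Σ_{i∈S} ‖u_k^i − m_i‖² ), i.e., the Euclidean norm of the concatenation of the vectors u_k^i − m_i over i ∈ S. Let a > 0, c ≥ 0, b ≥ 0, γ > 0 and let k₁ ≠ k₂ be indices in {1,…,K}. Assume: (i) ‖u_{k₁}^i‖ ≥ a for all i ∈ S; (ii) ‖u_{k₂}^i‖ ≤ c for all i ∈ S; (iii) ‖m_i‖ ≤ b for all i ∈ S; and (iv) a − b ≥ √K · γ · (c + b). Then DV'_{k₁} ≥ √|S| · (a − b), DV'_{k₂} ≤ √|S| · (c + b), and hence DV'_{k₁} ≥ √K · γ · DV'_{k₂}.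 -/
open Finset

/-- **Block-norm variant of Proposition 1.** With rows `u k i ∈ ℝ^d`, task-averages
`m i = (1/K) ∑ j, u j i`, and block diversity `DV' k = √(∑ i ∈ S, ‖u k i - m i‖²)`: if
`‖u k₁ i‖ ≥ a`, `‖u k₂ i‖ ≤ c`, `‖m i‖ ≤ b` on `S`, and `a - b ≥ √K · γ · (c + b)`, then
`DV' k₁ ≥ √|S| · (a - b)`, `DV' k₂ ≤ √|S| · (c + b)`, and `DV' k₁ ≥ √K · γ · DV' k₂`. -/
theorem block_diversity_separation
    {ι : Type*} (d K : ℕ) (hd : 1 ≤ d) (hK : 1 ≤ K)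
    (S : Finset ι) (hS : S.Nonempty)
    (u : Fin K → ι → EuclideanSpace ℝ (Fin d))
    (a c b γ : ℝ) (ha : 0 < a) (hc : 0 ≤ c) (hb : 0 ≤ b) (hγ : 0 < γ)
    (k₁ k₂ : Fin K) (hne : k₁ ≠ k₂)
    (hlow : ∀ i ∈ S, a ≤ ‖u k₁ i‖)
    (hup : ∀ i ∈ S, ‖u k₂ i‖ ≤ c)
    (hmean : ∀ i ∈ S, ‖(K : ℝ)⁻¹ • ∑ j, u j i‖ ≤ b)
    (hsep : Real.sqrt K * γ * (c + b) ≤ a - b) :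
    Real.sqrt (S.card : ℝ) * (a - b) ≤
        Real.sqrt (∑ i ∈ S, ‖u k₁ i - (K : ℝ)⁻¹ • ∑ j, u j i‖ ^ 2) ∧
    Real.sqrt (∑ i ∈ S, ‖u k₂ i - (K : ℝ)⁻¹ • ∑ j, u j i‖ ^ 2) ≤
        Real.sqrt (S.card : ℝ) * (c + b) ∧
    Real.sqrt K * γ * Real.sqrt (∑ i ∈ S, ‖u k₂ i - (K : ℝ)⁻¹ • ∑ j, u j i‖ ^ 2) ≤
      Real.sqrt (∑ i ∈ S, ‖u k₁ i - (K : ℝ)⁻¹ • ∑ j, u j i‖ ^ 2) := by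

  have hKγ : 0 ≤ Real.sqrt K * γ := mul_nonneg (Real.sqrt_nonneg _) hγ.le
  have hab : 0 ≤ a - b := le_trans (by positivity) hsep
  have hcb : 0 ≤ c + b := by linarith
  -- pointwise bounds
  have hlow' : ∀ i ∈ S, a - b ≤ ‖u k₁ i - (K : ℝ)⁻¹ • ∑ j, u j i‖ := by
    intro i hi
    have := norm_sub_norm_le (u k₁ i) ((K : ℝ)⁻¹ • ∑ j, u j i)
    have h1 := hlow i hi
    have h2 := hmean i hi
    linarith
  have hup' : ∀ i ∈ S, ‖u k₂ i - (K : ℝ)⁻¹ • ∑ j, u j i‖ ≤ c + b := by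
    intro i hi
    have := norm_sub_le (u k₂ i) ((K : ℝ)⁻¹ • ∑ j, u j i)
    have h1 := hup i hi
    have h2 := hmean i hi
    linarith
  have hsum1 : (S.card : ℝ) * (a - b) ^ 2 ≤ ∑ i ∈ S, ‖u k₁ i - (K : ℝ)⁻¹ • ∑ j, u j i‖ ^ 2 := by
    calc (S.card : ℝ) * (a - b) ^ 2 = ∑ _i ∈ S, (a - b) ^ 2 := by
          rw [Finset.sum_const, nsmul_eq_mul]
      _ ≤ _ := Finset.sum_le_sum fun i hi =>
          pow_le_pow_left₀ hab (hlow' i hi) 2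
  have hsum2 : ∑ i ∈ S, ‖u k₂ i - (K : ℝ)⁻¹ • ∑ j, u j i‖ ^ 2 ≤ (S.card : ℝ) * (c + b) ^ 2 := by
    calc ∑ i ∈ S, ‖u k₂ i - (K : ℝ)⁻¹ • ∑ j, u j i‖ ^ 2
        ≤ ∑ _i ∈ S, (c + b) ^ 2 := Finset.sum_le_sum fun i hi =>
          pow_le_pow_left₀ (norm_nonneg _) (hup' i hi) 2
      _ = (S.card : ℝ) * (c + b) ^ 2 := by rw [Finset.sum_const, nsmul_eq_mul]
  have e1 : Real.sqrt ((S.card : ℝ) * (a - b) ^ 2) = Real.sqrt (S.card : ℝ) * (a - b) := by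
    rw [Real.sqrt_mul (by positivity), Real.sqrt_sq hab]
  have e2 : Real.sqrt ((S.card : ℝ) * (c + b) ^ 2) = Real.sqrt (S.card : ℝ) * (c + b) := by
    rw [Real.sqrt_mul (by positivity), Real.sqrt_sq hcb]
  have h1 : Real.sqrt (S.card : ℝ) * (a - b) ≤
      Real.sqrt (∑ i ∈ S, ‖u k₁ i - (K : ℝ)⁻¹ • ∑ j, u j i‖ ^ 2) := by
    rw [← e1]; exact Real.sqrt_le_sqrt hsum1
  have h2 : Real.sqrt (∑ i ∈ S, ‖u k₂ i - (K : ℝ)⁻¹ • ∑ j, u j i‖ ^ 2) ≤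
      Real.sqrt (S.card : ℝ) * (c + b) := by
    rw [← e2]; exact Real.sqrt_le_sqrt hsum2
  refine ⟨h1, h2, ?_⟩
  calc Real.sqrt K * γ * Real.sqrt (∑ i ∈ S, ‖u k₂ i - (K : ℝ)⁻¹ • ∑ j, u j i‖ ^ 2)
      ≤ Real.sqrt K * γ * (Real.sqrt (S.card : ℝ) * (c + b)) := by
        exact mul_le_mul_of_nonneg_left h2 hKγ
    _ = Real.sqrt (S.card : ℝ) * (Real.sqrt K * γ * (c + b)) := by ring
    _ ≤ Real.sqrt (S.card : ℝ) * (a - b) :=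
        mul_le_mul_of_nonneg_left hsep (Real.sqrt_nonneg _)
    _ ≤ _ := h1
end
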